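/- Let t = (a,b,c) be a triplet of distinct indices. The STE loss K ↦ −log p_t^K is a convex function on the space of real n×n matrices. -/

import Mathlib

/-- The kernel squared distance `d²_K(a,b) = K_aa + K_bb - 2 K_ab`. -/
def d2 {n : ℕ} (K : Matrix (Fin n) (Fin n) ℝ) (a b : Fin n) : ℝ :=
  K a a + K b b - 2 * K a b

/-- The STE satisfaction probability of the triplet `(a,b,c)` under kernel `K`. -/
noncomputable def pSTE {n : ℕ} (K : Matrix (Fin n) (Fin n) ℝ) (a b c : Fin n) : ℝ :=
  Real.exp (-(d2 K a b)) / (Real.exp (-(d2 K a b)) + Real.exp (-(d2 K a c)))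

/-! The loss is `-log p_t^K = log (1 + exp (d²_K(a,b) - d²_K(a,c)))`, i.e. the softplus function
applied to a linear functional of `K`. Softplus is convex because its derivative, the logistic
function `(1 + exp (-x))⁻¹`, is increasing. -/

open Real

noncomputable def softplus (x : ℝ) : ℝ := log (1 + exp x)

lemma hasDerivAt_softplus (x : ℝ) : HasDerivAt softplus (1 + exp (-x))⁻¹ x := by
  refine (((hasDerivAt_exp x).const_add 1).log (by positivity)).congr_deriv ?_
  rw [exp_neg]
  field_simp
  ring

lemma monotone_deriv_softplus : Monotone (deriv softplus) := by
  intro x y hxy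
  simp only [(hasDerivAt_softplus _).deriv]
  gcongr

lemma convexOn_softplus : ConvexOn ℝ Set.univ softplus :=
  monotone_deriv_softplus.convexOn_univ_of_deriv fun x => (hasDerivAt_softplus x).differentiableAt

lemma neg_log_exp_neg_div_exp_neg_add_exp_neg (u v : ℝ) :
    -log (exp (-u) / (exp (-u) + exp (-v))) = softplus (u - v) := by
  have hsum : exp (-u) + exp (-v) = exp (-u) * (1 + exp (u - v)) := by
    rw [mul_add, mul_one, ← exp_add]
    ring_nf
  rw [hsum, div_mul_cancel_left₀ (exp_ne_zero _), log_inv, neg_neg, softplus]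

def d2LinearMap {n : ℕ} (a b : Fin n) : Matrix (Fin n) (Fin n) ℝ →ₗ[ℝ] ℝ where
  toFun K := d2 K a b
  map_add' K L := by simp only [d2, Matrix.add_apply]; ring
  map_smul' r K := by simp only [d2, Matrix.smul_apply, smul_eq_mul, RingHom.id_apply]; ring

theorem ste_loss_convexOn_general {n : ℕ} (a b c : Fin n) :
    ConvexOn ℝ Set.univ
      (fun K : Matrix (Fin n) (Fin n) ℝ => -Real.log (pSTE K a b c)) := by
  have hloss : (fun K => -log (pSTE K a b c)) =
      softplus ∘ (d2LinearMap a b - d2LinearMap a c) :=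
    funext fun K => neg_log_exp_neg_div_exp_neg_add_exp_neg (d2 K a b) (d2 K a c)
  rw [hloss]
  exact convexOn_softplus.comp_linearMap _

/-- The STE loss `K ↦ -log p_t^K` is convex on the space of real `n × n` matrices. -/
theorem ste_loss_convexOn {n : ℕ} (a b c : Fin n)
    (hab : a ≠ b) (hac : a ≠ c) (hbc : b ≠ c) :
    ConvexOn ℝ Set.univ
      (fun K : Matrix (Fin n) (Fin n) ℝ => -Real.log (pSTE K a b c)) :=
  ste_loss_convexOn_general a b c
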